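/- arXiv:0803.3502 — 3 statements merged into one kernel-verified Lean document; each statement's English description precedes it below -/
import Mathlib

section
/- Define σ : ℝ³ → ℝ by σ(u,v,w) = α·u⁺v⁺/(u⁺+v⁺+w⁺) if (u⁺,v⁺,w⁺) ≠ (0,0,0) and σ(u,v,w) = 0 otherwise, where α > 0 and x⁺ = max(x,0). Then σ is globally Lipschitz: there exists a constant C > 0 such that |σ(u₁,u₂,u₃) − σ(v₁,v₂,v₃)| ≤ C·(|u₁−v₁| + |u₂−v₂| + |u₃−v₃|) for all (u₁,u₂,u₃), (v₁,v₂,v₃) ∈ ℝ³. -/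
/-! Writing `x⁺ = max x 0`, σ is `α · f(u⁺, v⁺, w⁺)` with `f(a, b, c) = a b / (a + b + c)` on the
closed octant. Each partial difference quotient of `f` is a fraction whose numerator is dominated by
its denominator (e.g. `b (b + c) ≤ (a + b + c)(a' + b + c)`), so `f` is 1-Lipschitz in each variable
for the `ℓ¹` distance; the positive part is 1-Lipschitz, so `C = α` works. -/

open Classical in
noncomputable def sigmaSIR (α u v w : ℝ) : ℝ :=
  if (max u 0, max v 0, max w 0) = ((0 : ℝ), (0 : ℝ), (0 : ℝ)) then 0
  else α * (max u 0) * (max v 0) / ((max u 0) + (max v 0) + (max w 0))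

/-- The case distinction in `sigmaSIR` is already Lean's convention `x / 0 = 0`. -/
lemma sigmaSIR_eq (α u v w : ℝ) :
    sigmaSIR α u v w = α * (max u 0 * max v 0 / (max u 0 + max v 0 + max w 0)) := by
  unfold sigmaSIR
  split_ifs with h
  · simp only [Prod.mk.injEq] at h
    simp [h.1, h.2.1, h.2.2]
  · rw [mul_assoc, mul_div_assoc]

section

variable {a a' b b' c c' : ℝ}

lemma abs_mul_div_sub_mul_div_le_left (ha : 0 ≤ a) (ha' : 0 ≤ a') (hb : 0 ≤ b) (hc : 0 ≤ c) :
    |a * b / (a + b + c) - a' * b / (a' + b + c)| ≤ |a - a'| := by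
  rcases hb.eq_or_lt with rfl | hb
  · simp
  have hd : 0 < a + b + c := by positivity
  have hd' : 0 < a' + b + c := by positivity
  have hnum : a * b * (a' + b + c) - (a + b + c) * (a' * b) = b * (b + c) * (a - a') := by ring
  rw [div_sub_div _ _ hd.ne' hd'.ne', hnum, abs_div, abs_mul, abs_of_pos (mul_pos hd hd'),
    abs_of_nonneg (by positivity), div_le_iff₀ (mul_pos hd hd'), mul_comm]
  exact mul_le_mul_of_nonneg_left (by nlinarith) (abs_nonneg _)

lemma abs_mul_div_sub_mul_div_le_right (ha : 0 ≤ a) (hb : 0 ≤ b) (hc : 0 ≤ c) (hc' : 0 ≤ c') :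
    |a * b / (a + b + c) - a * b / (a + b + c')| ≤ |c - c'| := by
  rcases (mul_nonneg ha hb).eq_or_lt with hab | hab
  · simp [← hab]
  have hd : 0 < a + b + c := by nlinarith
  have hd' : 0 < a + b + c' := by nlinarith
  have hnum : a * b * (a + b + c') - (a + b + c) * (a * b) = a * b * (c' - c) := by ring
  rw [div_sub_div _ _ hd.ne' hd'.ne', hnum, abs_div, abs_mul, abs_of_pos (mul_pos hd hd'),
    abs_of_pos hab, div_le_iff₀ (mul_pos hd hd'), abs_sub_comm, mul_comm]
  exact mul_le_mul_of_nonneg_left (by nlinarith) (abs_nonneg _)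

lemma abs_mul_div_sub_mul_div_le (ha : 0 ≤ a) (ha' : 0 ≤ a') (hb : 0 ≤ b) (hb' : 0 ≤ b')
    (hc : 0 ≤ c) (hc' : 0 ≤ c') :
    |a * b / (a + b + c) - a' * b' / (a' + b' + c')| ≤ |a - a'| + |b - b'| + |c - c'| := by
  have h₁ := abs_mul_div_sub_mul_div_le_left ha ha' hb hc
  have h₂ : |a' * b / (a' + b + c) - a' * b' / (a' + b' + c)| ≤ |b - b'| := by
    simpa only [mul_comm, add_comm, add_left_comm] using
      abs_mul_div_sub_mul_div_le_left hb hb' ha' hc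
  have h₃ := abs_mul_div_sub_mul_div_le_right ha' hb' hc hc'
  have := abs_sub_le (a * b / (a + b + c)) (a' * b / (a' + b + c)) (a' * b' / (a' + b' + c'))
  have := abs_sub_le (a' * b / (a' + b + c)) (a' * b' / (a' + b' + c)) (a' * b' / (a' + b' + c'))
  linarith

end

lemma abs_sigmaSIR_sub_le (α u₁ u₂ u₃ v₁ v₂ v₃ : ℝ) :
    |sigmaSIR α u₁ u₂ u₃ - sigmaSIR α v₁ v₂ v₃| ≤
      |α| * (|u₁ - v₁| + |u₂ - v₂| + |u₃ - v₃|) := by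
  rw [sigmaSIR_eq, sigmaSIR_eq, ← mul_sub, abs_mul]
  gcongr
  calc _ ≤ |max u₁ 0 - max v₁ 0| + |max u₂ 0 - max v₂ 0| + |max u₃ 0 - max v₃ 0| :=
        abs_mul_div_sub_mul_div_le (le_max_right _ _) (le_max_right _ _) (le_max_right _ _)
          (le_max_right _ _) (le_max_right _ _) (le_max_right _ _)
    _ ≤ _ := add_le_add_three (abs_max_sub_max_le_abs _ _ _) (abs_max_sub_max_le_abs _ _ _)
        (abs_max_sub_max_le_abs _ _ _)

theorem sigmaSIR_lipschitz (α : ℝ) (hα : 0 < α) :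
    ∃ C : ℝ, 0 < C ∧ ∀ u₁ u₂ u₃ v₁ v₂ v₃ : ℝ,
      |sigmaSIR α u₁ u₂ u₃ - sigmaSIR α v₁ v₂ v₃| ≤
        C * (|u₁ - v₁| + |u₂ - v₂| + |u₃ - v₃|) := by
  refine ⟨α, hα, fun u₁ u₂ u₃ v₁ v₂ v₃ => ?_⟩
  simpa only [abs_of_pos hα] using abs_sigmaSIR_sub_le α u₁ u₂ u₃ v₁ v₂ v₃
end

section
/- Discrete maximum principle / nonnegativity for the implicit scheme with nonnegative source: let Ω_R be a finite set with m(K) > 0 and symmetric transmissibilities τ_{K,L} > 0, let a > 0, Δt > 0, and suppose (u_K)_K solves m(K)(u_K − u⁰_K)/Δt − a Σ_{L∈N(K)} τ_{K,L}(u_L − u_K) = f_K for all K, where u⁰_K ≥ 0 and f_K ≥ 0 for all K. Then u_K ≥ 0 for all K. -/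
/-! At a minimum point `K₀` of `u` every flux `τ K₀ L * (u L - u K₀)` is nonnegative, so the scheme
gives `m K₀ * (u K₀ - u₀ K₀) / Δt ≥ f K₀ ≥ 0`, i.e. `u K₀ ≥ u₀ K₀ ≥ 0`; hence `u ≥ u K₀ ≥ 0`. -/

theorem sum_flux_nonneg_of_forall_le {V : Type*} [Fintype V] (N : V → V → Prop) [DecidableRel N]
    (τ : V → V → ℝ) (u : V → ℝ) (K₀ : V) (hτ : ∀ L, N K₀ L → 0 ≤ τ K₀ L)
    (hmin : ∀ L, u K₀ ≤ u L) :
    0 ≤ ∑ L, (if N K₀ L then τ K₀ L * (u L - u K₀) else 0) := by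
  refine Finset.sum_nonneg fun L _ => ?_
  split_ifs with hN
  · exact mul_nonneg (hτ L hN) (sub_nonneg.mpr (hmin L))
  · exact le_rfl

theorem le_of_implicit_step {m a Δt u u₀ flux f : ℝ} (hm : 0 < m) (ha : 0 ≤ a) (hΔt : 0 < Δt)
    (hstep : m * (u - u₀) / Δt - a * flux = f) (hflux : 0 ≤ flux) (hf : 0 ≤ f) :
    u₀ ≤ u := by
  have hincr : 0 ≤ m * (u - u₀) / Δt := by linarith [mul_nonneg ha hflux]
  have hmass : 0 ≤ m * (u - u₀) := by simpa using (le_div_iff₀ hΔt).mp hincr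
  exact sub_nonneg.mp (nonneg_of_mul_nonneg_right hmass hm)

theorem discrete_maximum_principle_general
    {V : Type*} [Fintype V] (N : V → V → Prop) [DecidableRel N]
    (τ : V → V → ℝ)
    (hτpos : ∀ K L, N K L → 0 < τ K L)
    (m : V → ℝ) (hm : ∀ K, 0 < m K)
    (a Δt : ℝ) (ha : 0 < a) (hΔt : 0 < Δt)
    (u u₀ f : V → ℝ)
    (hscheme : ∀ K, m K * (u K - u₀ K) / Δt -
        a * ∑ L, (if N K L then τ K L * (u L - u K) else 0) = f K)
    (hu₀ : ∀ K, 0 ≤ u₀ K) (hf : ∀ K, 0 ≤ f K) :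
    ∀ K, 0 ≤ u K := by
  intro K
  have : Nonempty V := ⟨K⟩
  obtain ⟨K₀, hmin⟩ := Finite.exists_min u
  have hflux := sum_flux_nonneg_of_forall_le N τ u K₀ (fun L h => (hτpos K₀ L h).le) hmin
  have hK₀ := le_of_implicit_step (hm K₀) ha.le hΔt (hscheme K₀) hflux (hf K₀)
  linarith [hu₀ K₀, hmin K]

theorem discrete_maximum_principle
    {V : Type*} [Fintype V] (N : V → V → Prop) [DecidableRel N]
    (hsymm : ∀ K L, N K L → N L K) (hirr : ∀ K, ¬ N K K)
    (τ : V → V → ℝ) (hτsymm : ∀ K L, τ K L = τ L K)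
    (hτpos : ∀ K L, N K L → 0 < τ K L)
    (m : V → ℝ) (hm : ∀ K, 0 < m K)
    (a Δt : ℝ) (ha : 0 < a) (hΔt : 0 < Δt)
    (u u₀ f : V → ℝ)
    (hscheme : ∀ K, m K * (u K - u₀ K) / Δt -
        a * ∑ L, (if N K L then τ K L * (u L - u K) else 0) = f K)
    (hu₀ : ∀ K, 0 ≤ u₀ K) (hf : ∀ K, 0 ≤ f K) :
    ∀ K, 0 ≤ u K :=
  discrete_maximum_principle_general N τ hτpos m hm a Δt ha hΔt u u₀ f hscheme hu₀ hf
end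

section
/- Space-translate estimate from discrete gradient bound (1D model version): let 0 = x₀ < x₁ < ... < x_M = 1 be a partition of [0,1] with mesh size h = max(x_{j+1} − x_j), and let u : [0,1) → ℝ be piecewise constant, u = u_j on [x_j, x_{j+1}). Suppose Σ_{j=0}^{M−2} (u_{j+1} − u_j)²/d_j ≤ G where d_j is the distance between consecutive cell centers and d_j ≥ αh for some α > 0. Then for every y > 0, ∫_{{x : x+y ≤ 1}} |u(x+y) − u(x)|² dx ≤ G·y·(y + 2h). -/
/-! If `z` lies in cell `j` and `z + y` in cell `j'`, then `u (z + y) - u z` telescopes into the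
jumps `c (k + 1) - c k` across the interfaces `x (k + 1)`, `j ≤ k < j'`, that `[z, z + y]` crosses,
and weighted Cauchy–Schwarz bounds its square by `(∑ d k) * ∑ (c (k + 1) - c k) ^ 2 / d k` with
`∑ d k ≤ y + h`. The interface `x (k + 1)` is crossed exactly for `z` in a window of length `y`,
so integrating in `z` costs one more factor `y`. -/

open MeasureTheory Finset

theorem exists_lt_mem_Ico_succ {α : Type*} [LinearOrder α] (x : ℕ → α) {M : ℕ} {w : α}
    (hw : w ∈ Set.Ico (x 0) (x M)) : ∃ j < M, w ∈ Set.Ico (x j) (x (j + 1)) := by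
  induction M with
  | zero => exact absurd hw.2 (not_lt.2 hw.1)
  | succ M ih =>
    by_cases hMw : x M ≤ w
    · exact ⟨M, M.lt_add_one, hMw, hw.2⟩
    · obtain ⟨j, hj, hjw⟩ := ih ⟨hw.1, not_le.1 hMw⟩
      exact ⟨j, by omega, hjw⟩

theorem le_of_mem_Ico_succ_of_le {α : Type*} [LinearOrder α] {x : ℕ → α} {M j j' : ℕ}
    (hx : MonotoneOn x (Set.Iic M)) (hj : j ≤ M) {z w : α} (hzw : z ≤ w)
    (hz : z ∈ Set.Ico (x j) (x (j + 1))) (hw : w ∈ Set.Ico (x j') (x (j' + 1))) : j ≤ j' := by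
  by_contra! hj'j
  have : x (j' + 1) ≤ x j := hx (Set.mem_Iic.2 (by omega)) (Set.mem_Iic.2 hj) hj'j
  exact (hw.2.trans_le this).not_ge (hz.1.trans hzw)

theorem integral_le_of_le_sum_indicator {ι X : Type*} [MeasurableSpace X] {μ : Measure X}
    {s : Finset ι} {A : ι → Set X} {e : ι → ℝ} {f : X → ℝ} {y : ℝ} (hy : 0 ≤ y)
    (hA : ∀ k ∈ s, MeasurableSet (A k)) (hAy : ∀ k ∈ s, μ (A k) ≤ ENNReal.ofReal y)
    (he : ∀ k ∈ s, 0 ≤ e k) (hf0 : 0 ≤ᵐ[μ] f)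
    (hf : ∀ᵐ z ∂μ, f z ≤ ∑ k ∈ s, (A k).indicator (fun _ => e k) z) :
    ∫ z, f z ∂μ ≤ (∑ k ∈ s, e k) * y := by
  have hint : ∀ k ∈ s, Integrable ((A k).indicator fun _ => e k) μ := fun k hk =>
    (integrable_indicator_iff (hA k hk)).2
      (integrableOn_const ((hAy k hk).trans_lt ENNReal.ofReal_lt_top).ne)
  calc ∫ z, f z ∂μ ≤ ∫ z, ∑ k ∈ s, (A k).indicator (fun _ => e k) z ∂μ :=
        integral_mono_of_nonneg hf0 (integrable_finsetSum s hint) hf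
    _ = ∑ k ∈ s, μ.real (A k) * e k := by
        rw [integral_finsetSum s hint]
        exact sum_congr rfl fun k hk => integral_indicator_const (e k) (hA k hk)
    _ ≤ ∑ k ∈ s, y * e k := sum_le_sum fun k hk =>
        mul_le_mul_of_nonneg_right (ENNReal.toReal_le_of_le_ofReal hy (hAy k hk)) (he k hk)
    _ = (∑ k ∈ s, e k) * y := by rw [sum_mul]; simp only [mul_comm]

section Partition

variable {x : ℕ → ℝ} {M : ℕ} {d : ℕ → ℝ}

theorem dist_centers_pos (hmono : ∀ j < M, x j < x (j + 1))
    (hd : ∀ j, j + 1 < M → d j = (x (j + 2) - x j) / 2) {k : ℕ} (hk : k + 1 < M) : 0 < d k := by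
  rw [hd k hk]
  linarith [hmono k (by omega), hmono (k + 1) hk]

theorem sq_sub_div_nonneg {c : ℕ → ℝ} (hmono : ∀ j < M, x j < x (j + 1))
    (hd : ∀ j, j + 1 < M → d j = (x (j + 2) - x j) / 2) {k : ℕ} (hk : k ∈ range (M - 1)) :
    0 ≤ (c (k + 1) - c k) ^ 2 / d k :=
  div_nonneg (sq_nonneg _) (dist_centers_pos hmono hd (by rw [mem_range] at hk; omega)).le

theorem sum_Ico_dist_centers_le {h : ℝ} (hmesh : ∀ j < M, x (j + 1) - x j ≤ h)
    (hd : ∀ j, j + 1 < M → d j = (x (j + 2) - x j) / 2) {j j' : ℕ} (hjj' : j ≤ j') (hj' : j' < M)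
    {z y : ℝ} (hz : z ∈ Set.Ico (x j) (x (j + 1))) (hzy : z + y ∈ Set.Ico (x j') (x (j' + 1))) :
    ∑ k ∈ Ico j j', d k ≤ y + h := by
  have hsplit : ∀ k ∈ Ico j j', d k = ((x (k + 1 + 1) - x (k + 1)) + (x (k + 1) - x k)) / 2 :=
    fun k hk => by rw [hd k (by simp only [mem_Ico] at hk; omega)]; ring
  rw [sum_congr rfl hsplit, ← sum_div, sum_add_distrib,
    sum_Ico_sub (fun k => x (k + 1)) hjj', sum_Ico_sub x hjj']
  linarith [hmesh j (by omega), hmesh j' hj', hz.1, hz.2, hzy.1]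

theorem sq_sub_le_mul_sum_Ico {h : ℝ} {c : ℕ → ℝ} (hmono : ∀ j < M, x j < x (j + 1))
    (hmesh : ∀ j < M, x (j + 1) - x j ≤ h) (hd : ∀ j, j + 1 < M → d j = (x (j + 2) - x j) / 2)
    {j j' : ℕ} (hjj' : j ≤ j') (hj' : j' < M) {z y : ℝ} (hz : z ∈ Set.Ico (x j) (x (j + 1)))
    (hzy : z + y ∈ Set.Ico (x j') (x (j' + 1))) :
    (c j' - c j) ^ 2 ≤ (y + h) * ∑ k ∈ Ico j j', (c (k + 1) - c k) ^ 2 / d k := by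
  have hdpos : ∀ k ∈ Ico j j', 0 < d k := fun k hk =>
    dist_centers_pos hmono hd (by simp only [mem_Ico] at hk; omega)
  calc (c j' - c j) ^ 2 = (∑ k ∈ Ico j j', (c (k + 1) - c k)) ^ 2 := by rw [sum_Ico_sub c hjj']
    _ ≤ (∑ k ∈ Ico j j', d k) * ∑ k ∈ Ico j j', (c (k + 1) - c k) ^ 2 / d k :=
        sum_sq_le_sum_mul_sum_of_sq_le_mul _ (fun k hk => (hdpos k hk).le)
          (fun k hk => div_nonneg (sq_nonneg _) (hdpos k hk).le)
          (fun k hk => (mul_div_cancel₀ _ (hdpos k hk).ne').ge)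
    _ ≤ (y + h) * ∑ k ∈ Ico j j', (c (k + 1) - c k) ^ 2 / d k :=
        mul_le_mul_of_nonneg_right (sum_Ico_dist_centers_le hmesh hd hjj' hj' hz hzy)
          (sum_nonneg fun k hk => div_nonneg (sq_nonneg _) (hdpos k hk).le)

theorem mem_Ico_sub_of_lt_of_le {k j j' : ℕ} (hx : MonotoneOn x (Set.Iic M))
    (hj' : j' ≤ M) (hk : k ∈ Ico j j') {z y : ℝ} (hz : z < x (j + 1)) (hzy : x j' ≤ z + y) :
    z ∈ Set.Ico (x (k + 1) - y) (x (k + 1)) := by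
  simp only [mem_Ico] at hk
  have h1 : x (j + 1) ≤ x (k + 1) :=
    hx (Set.mem_Iic.2 (by omega)) (Set.mem_Iic.2 (by omega)) (by omega)
  have h2 : x (k + 1) ≤ x j' := hx (Set.mem_Iic.2 (by omega)) (Set.mem_Iic.2 hj') (by omega)
  constructor <;> linarith

theorem sq_sub_le_sum_indicator {h : ℝ} {c : ℕ → ℝ} {u : ℝ → ℝ} (hx0 : x 0 = 0) (hxM : x M = 1)
    (hmono : ∀ j < M, x j < x (j + 1)) (hh : 0 ≤ h) (hmesh : ∀ j < M, x (j + 1) - x j ≤ h)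
    (hd : ∀ j, j + 1 < M → d j = (x (j + 2) - x j) / 2)
    (hu : ∀ j < M, ∀ z ∈ Set.Ico (x j) (x (j + 1)), u z = c j) {y : ℝ} (hy : 0 ≤ y)
    {z : ℝ} (hz : z ∈ Set.Ioo 0 (1 - y)) :
    (u (z + y) - u z) ^ 2 ≤ ∑ k ∈ range (M - 1),
      (Set.Ico (x (k + 1) - y) (x (k + 1))).indicator
        (fun _ => (y + 2 * h) * ((c (k + 1) - c k) ^ 2 / d k)) z := by
  have hx : MonotoneOn x (Set.Iic M) := (strictMonoOn_Iic_of_lt_succ hmono).monotoneOn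
  have hcell : ∀ w ∈ Set.Ico (0 : ℝ) 1, ∃ j < M, w ∈ Set.Ico (x j) (x (j + 1)) :=
    fun w hw => exists_lt_mem_Ico_succ x (by rwa [hx0, hxM])
  obtain ⟨j, hj, hzj⟩ := hcell z ⟨hz.1.le, by linarith [hz.2]⟩
  obtain ⟨j', hj', hzj'⟩ := hcell (z + y) ⟨by linarith [hz.1], by linarith [hz.2]⟩
  have hjj' : j ≤ j' := le_of_mem_Ico_succ_of_le hx hj.le (le_add_of_nonneg_right hy) hzj hzj'
  have hsub : Ico j j' ⊆ range (M - 1) := fun k hk => by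
    simp only [mem_Ico, mem_range] at hk ⊢; omega
  have he : ∀ k ∈ range (M - 1), 0 ≤ (y + 2 * h) * ((c (k + 1) - c k) ^ 2 / d k) :=
    fun k hk => mul_nonneg (by linarith) (sq_sub_div_nonneg hmono hd hk)
  rw [hu j hj z hzj, hu j' hj' (z + y) hzj']
  calc (c j' - c j) ^ 2 ≤ (y + h) * ∑ k ∈ Ico j j', (c (k + 1) - c k) ^ 2 / d k :=
        sq_sub_le_mul_sum_Ico hmono hmesh hd hjj' hj' hzj hzj'
    _ ≤ ∑ k ∈ Ico j j', (y + 2 * h) * ((c (k + 1) - c k) ^ 2 / d k) := by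
        rw [mul_sum]
        exact sum_le_sum fun k hk =>
          mul_le_mul_of_nonneg_right (by linarith) (sq_sub_div_nonneg hmono hd (hsub hk))
    _ = ∑ k ∈ Ico j j', (Set.Ico (x (k + 1) - y) (x (k + 1))).indicator
          (fun _ => (y + 2 * h) * ((c (k + 1) - c k) ^ 2 / d k)) z :=
        sum_congr rfl fun k hk =>
          (Set.indicator_of_mem (mem_Ico_sub_of_lt_of_le hx hj'.le hk hzj.2 hzj'.1)
            fun _ => (y + 2 * h) * ((c (k + 1) - c k) ^ 2 / d k)).symm
    _ ≤ _ := sum_le_sum_of_subset_of_nonneg hsub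
        fun k hk _ => Set.indicator_nonneg (fun _ _ => he k hk) z

end Partition

theorem space_translate_estimate_1d_general
    (M : ℕ) (x : ℕ → ℝ)
    (hx0 : x 0 = 0) (hxM : x M = 1)
    (hmono : ∀ j < M, x j < x (j + 1))
    (h : ℝ) (hh : 0 < h) (hmesh : ∀ j < M, x (j + 1) - x j ≤ h)
    (d : ℕ → ℝ) (hd : ∀ j, j + 1 < M → d j = (x (j + 2) - x j) / 2)
    (c : ℕ → ℝ) (u : ℝ → ℝ)
    (hu : ∀ j < M, ∀ z ∈ Set.Ico (x j) (x (j + 1)), u z = c j)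
    (G : ℝ) (hG : ∑ j ∈ Finset.range (M - 1), (c (j + 1) - c j) ^ 2 / d j ≤ G)
    (y : ℝ) (hy : 0 < y) :
    ∫ z in Set.Ioo (0 : ℝ) (1 - y), (u (z + y) - u z) ^ 2 ≤ G * y * (y + 2 * h) := by
  have he : ∀ k ∈ range (M - 1), 0 ≤ (y + 2 * h) * ((c (k + 1) - c k) ^ 2 / d k) :=
    fun k hk => mul_nonneg (by linarith) (sq_sub_div_nonneg hmono hd hk)
  calc ∫ z in Set.Ioo (0 : ℝ) (1 - y), (u (z + y) - u z) ^ 2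
      ≤ (∑ k ∈ range (M - 1), (y + 2 * h) * ((c (k + 1) - c k) ^ 2 / d k)) * y := by
        refine integral_le_of_le_sum_indicator
          (A := fun k => Set.Ico (x (k + 1) - y) (x (k + 1))) hy.le (fun _ _ => measurableSet_Ico)
          (fun k _ => ?_) he (ae_of_all _ fun _ => sq_nonneg _) ?_
        · calc volume.restrict _ _ ≤ volume (Set.Ico (x (k + 1) - y) (x (k + 1))) :=
                Measure.restrict_apply_le _ _
            _ = ENNReal.ofReal y := by rw [Real.volume_Ico, sub_sub_cancel]
        · exact (ae_restrict_iff' measurableSet_Ioo).2 <| ae_of_all _ fun z hz =>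
            sq_sub_le_sum_indicator hx0 hxM hmono hh.le hmesh hd hu hy.le hz
    _ ≤ G * y * (y + 2 * h) := by
        rw [← mul_sum]
        linarith [mul_le_mul_of_nonneg_left hG (by positivity : 0 ≤ y * (y + 2 * h))]

theorem space_translate_estimate_1d
    (M : ℕ) (hM : 1 ≤ M) (x : ℕ → ℝ)
    (hx0 : x 0 = 0) (hxM : x M = 1)
    (hmono : ∀ j < M, x j < x (j + 1))
    (h : ℝ) (hh : 0 < h) (hmesh : ∀ j < M, x (j + 1) - x j ≤ h)
    (d : ℕ → ℝ) (hd : ∀ j, j + 1 < M → d j = (x (j + 2) - x j) / 2)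
    (α : ℝ) (hα : 0 < α) (hdα : ∀ j, j + 1 < M → α * h ≤ d j)
    (c : ℕ → ℝ) (u : ℝ → ℝ)
    (hu : ∀ j < M, ∀ z ∈ Set.Ico (x j) (x (j + 1)), u z = c j)
    (G : ℝ) (hG : ∑ j ∈ Finset.range (M - 1), (c (j + 1) - c j) ^ 2 / d j ≤ G)
    (y : ℝ) (hy : 0 < y) :
    ∫ z in Set.Ioo (0 : ℝ) (1 - y), (u (z + y) - u z) ^ 2 ≤ G * y * (y + 2 * h) :=
  space_translate_estimate_1d_general M x hx0 hxM hmono h hh hmesh d hd c u hu G hG y hy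
end
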